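/- In a vertex-minimal subcubic planar graph G without 5-cycles whose square is not 7-choosable, no 3-cycle shares an edge with a 6-cycle. -/

import Mathlib

open SimpleGraph

/-- The square of a graph: two distinct vertices are adjacent iff their
distance in `G` is at most 2 (i.e. they are adjacent or have a common neighbor). -/
def square {V : Type} (G : SimpleGraph V) : SimpleGraph V where
  Adj u v := u ≠ v ∧ (G.Adj u v ∨ ∃ w, G.Adj u w ∧ G.Adj w v)
  symm := by
    constructor
    rintro u v ⟨h1, h2⟩
    refine ⟨h1.symm, ?_⟩
    rcases h2 with h | ⟨w, hw1, hw2⟩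
    · exact Or.inl h.symm
    · exact Or.inr ⟨w, hw2.symm, hw1.symm⟩
  loopless := ⟨fun v h => h.1 rfl⟩

/-- A graph is `k`-choosable if for every assignment of lists (of colors) of size `k`
to the vertices there is a proper coloring choosing each vertex's color from its list. -/
def Choosable {V : Type} (G : SimpleGraph V) (k : ℕ) : Prop :=
  ∀ L : V → Finset ℕ, (∀ v, (L v).card = k) →
    ∃ c : V → ℕ, (∀ v, c v ∈ L v) ∧ ∀ u v, G.Adj u v → c u ≠ c v

/-- A graph is subcubic if every vertex has degree at most 3. -/
def Subcubic {V : Type} (G : SimpleGraph V) : Prop :=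
  ∀ v : V, (G.neighborSet v).ncard ≤ 3

/-- A graph has no 5-cycles. -/
def NoFiveCycle {V : Type} (G : SimpleGraph V) : Prop :=
  ∀ (v : V) (w : G.Walk v v), w.IsCycle → w.length ≠ 5

/-- `H` is a minor of `G`: there are nonempty, pairwise disjoint, connected branch
sets in `G`, one for each vertex of `H`, with an edge of `G` between the branch sets
of any two adjacent vertices of `H`. -/
def IsMinor {V W : Type} (G : SimpleGraph V) (H : SimpleGraph W) : Prop :=
  ∃ f : W → Set V,
    (∀ w, (f w).Nonempty) ∧
    (∀ w, (G.induce (f w)).Connected) ∧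
    (∀ w₁ w₂, w₁ ≠ w₂ → Disjoint (f w₁) (f w₂)) ∧
    (∀ w₁ w₂, H.Adj w₁ w₂ → ∃ a ∈ f w₁, ∃ b ∈ f w₂, G.Adj a b)

/-- Planarity, via Wagner's characterization: no `K₅` minor and no `K₃,₃` minor. -/
def Planar {V : Type} (G : SimpleGraph V) : Prop :=
  ¬ IsMinor G (completeGraph (Fin 5)) ∧
  ¬ IsMinor G (completeBipartiteGraph (Fin 3) (Fin 3))

/-!
A triangle `w u v` sharing the edge `u v` with a hexagon `u v p₁ p₂ p₃ p₄` is reducible. As `G`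
has no 5-cycle, `w` is not on the hexagon. If `w` is adjacent to `p₁` (or `p₄`), the vertices
`u, v, w, p₁` span a `K₄` minus an edge; otherwise take all seven vertices. Each vertex of such a
configuration `T` has at most one neighbour outside `T`, so the square of `G - T` is the square of
`G` restricted to `V \ T`, and by minimality it has a colouring from the lists. As `G` is
subcubic, few coloured vertices lie within distance two of each vertex of `T`. For `K₄` minus an
edge every vertex keeps 4 colours and Hall's theorem finishes. For the seven vertices the lists
left at `w, u, v, p₁, p₂, p₃, p₄` have sizes `4, 5, 5, 3, 2, 2, 3`, and, again because there is
no 5-cycle, only the antipodal pairs of the hexagon and `w` with `p₂, p₃` are at distance three.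
Such lists colour the square of the configuration: if `w` and `p₃` share a colour, use it on
both and colour greedily; otherwise colour `p₁, …, p₄` first and finish the triangle `w u v`
by Hall's theorem.
-/

open Finset

variable {V W : Type}

namespace SimpleGraph.Walk

variable {G : SimpleGraph V}

theorem getVert_mod_length {x : V} (c : G.Walk x x) {i : ℕ} (hi : i ≤ c.length) :
    c.getVert (i % c.length) = c.getVert i := by
  rcases hi.lt_or_eq with hi | rfl
  · rw [Nat.mod_eq_of_lt hi]
  · simp

theorem IsCycle.exists_cyclic_labelling {x : V} {c : G.Walk x x} (hc : c.IsCycle) {n : ℕ}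
    [NeZero n] (hn : c.length = n) {e : Sym2 V} (he : e ∈ c.edges) :
    ∃ f : Fin n → V, Function.Injective f ∧ (∀ k, G.Adj (f k) (f (k + 1))) ∧
      e = s(f 0, f 1) := by
  obtain ⟨m, hm, rfl⟩ := List.getElem_of_mem he
  subst hn
  have hm : m < c.length := by simpa using hm
  have hlt (j : ℕ) : j % c.length < c.length := Nat.mod_lt _ (Nat.pos_of_neZero _)
  refine ⟨fun k => c.getVert ((m + k) % c.length), fun k k' hkk' => ?_, fun k => ?_, ?_⟩
  · have := hc.getVert_injOn' (Nat.le_sub_one_of_lt (hlt _)) (Nat.le_sub_one_of_lt (hlt _))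
      hkk'
    have := Nat.ModEq.add_left_cancel' m this
    rw [Nat.ModEq, Nat.mod_eq_of_lt k.isLt, Nat.mod_eq_of_lt k'.isLt] at this
    exact Fin.ext this
  · have hsucc : (m + ↑(k + 1)) % c.length = ((m + k) % c.length + 1) % c.length := by
      rw [Fin.val_add, Fin.val_one', Nat.add_mod_mod, ← add_assoc, Nat.add_mod_mod,
        Nat.mod_add_mod]
    simp only [hsucc, c.getVert_mod_length (Nat.succ_le_of_lt (hlt _))]
    exact c.adj_getVert_succ (hlt _)
  · rw [getElem_edges, ← c.getVert_mod_length hm]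
    simp [Nat.mod_eq_of_lt hm]

end SimpleGraph.Walk

section Transfer

variable {G : SimpleGraph V} {H : SimpleGraph W}

theorem Subcubic.comap [Finite V] (e : H ↪g G) (hG : Subcubic G) : Subcubic H := fun v =>
  calc (H.neighborSet v).ncard = (e '' H.neighborSet v).ncard :=
        (Set.ncard_image_of_injective _ e.injective).symm
    _ ≤ (G.neighborSet (e v)).ncard :=
        Set.ncard_le_ncard (by rintro _ ⟨x, hx, rfl⟩; exact e.map_adj_iff.mpr hx)
    _ ≤ 3 := hG _

theorem NoFiveCycle.comap (e : H ↪g G) (hG : NoFiveCycle G) : NoFiveCycle H :=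
  fun _ c hc hlen => hG _ (c.map e.toHom) (hc.map e.injective) (by rwa [Walk.length_map])

theorem IsMinor.map {X : Type} {K : SimpleGraph X} (e : H ↪g G) (hK : IsMinor H K) :
    IsMinor G K := by
  obtain ⟨f, hne, hconn, hdisj, hadj⟩ := hK
  refine ⟨fun x => e '' f x, fun x => (hne x).image e, fun x => ?_,
    fun x y hxy => Set.disjoint_image_of_injective e.injective (hdisj x y hxy), fun x y hxy => ?_⟩
  · refine (hconn x).map (induceHom e.toHom (Set.mapsTo_image e (f x))) ?_
    rintro ⟨_, v, hv, rfl⟩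
    exact ⟨⟨v, hv⟩, rfl⟩
  · obtain ⟨a, ha, b, hb, hab⟩ := hadj x y hxy
    exact ⟨e a, Set.mem_image_of_mem e ha, e b, Set.mem_image_of_mem e hb,
      e.map_adj_iff.mpr hab⟩

theorem Planar.comap (e : H ↪g G) (hG : Planar G) : Planar H :=
  ⟨fun h => hG.1 (h.map e), fun h => hG.2 (h.map e)⟩

theorem square_adj_map_of_injective (f : H →g G) (hf : Function.Injective f) {a b : W}
    (hab : (square H).Adj a b) : (square G).Adj (f a) (f b) := by
  obtain ⟨hne, h | ⟨z, haz, hzb⟩⟩ := hab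
  · exact ⟨hf.ne hne, Or.inl (f.map_adj h)⟩
  · exact ⟨hf.ne hne, Or.inr ⟨f z, f.map_adj haz, f.map_adj hzb⟩⟩

theorem choosable_square_of_iso {k : ℕ} (e : H ≃g G) (hG : Choosable (square G) k) :
    Choosable (square H) k := by
  intro L hL
  obtain ⟨c, hcL, hc⟩ := hG (L ∘ e.symm) fun _ => hL _
  exact ⟨c ∘ e, fun v => by simpa using hcL (e v),
    fun a b hab => hc _ _ (square_adj_map_of_injective e.toHom e.injective hab)⟩

end Transfer

def SquareChoosableBelow (N : ℕ) : Prop :=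
  ∀ n < N, ∀ G' : SimpleGraph (Fin n), Subcubic G' → Planar G' → NoFiveCycle G' →
    Choosable (square G') 7

section Deletion

variable [Fintype V] {G : SimpleGraph V}

theorem choosable_square_of_embedding (hsub : Subcubic G) (hpl : Planar G)
    (h5 : NoFiveCycle G) (hmin : SquareChoosableBelow (Fintype.card V)) [Fintype W]
    {H : SimpleGraph W} (e : H ↪g G) (hcard : Fintype.card W < Fintype.card V) :
    Choosable (square H) 7 := by
  let iso := H.overFinIso rfl
  let e' := e.comp iso.symm.toEmbedding
  exact choosable_square_of_iso iso
    (hmin _ hcard _ (hsub.comap e') (hpl.comap e') (h5.comap e'))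

theorem exists_square_coloring_compl (hsub : Subcubic G) (hpl : Planar G) (h5 : NoFiveCycle G)
    (hmin : SquareChoosableBelow (Fintype.card V)) {T : Set V} (hT : T.Nonempty)
    (hout : ∀ z ∈ T, ∀ a ∉ T, ∀ b ∉ T, G.Adj z a → G.Adj z b → a = b)
    (L : V → Finset ℕ) (hL : ∀ v, #(L v) = 7) :
    ∃ φ : V → ℕ, (∀ x ∉ T, φ x ∈ L x) ∧
      ∀ x ∉ T, ∀ y ∉ T, (square G).Adj x y → φ x ≠ φ y := by
  classical
  obtain ⟨t, ht⟩ := hT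
  obtain ⟨c, hcL, hc⟩ := choosable_square_of_embedding hsub hpl h5 hmin (Embedding.induce Tᶜ)
    (Fintype.card_subtype_lt (x := t) (by simpa using ht)) (fun x => L x) (fun x => hL x)
  refine ⟨fun x => if hx : x ∈ T then 0 else c ⟨x, hx⟩,
    fun x hx => by simpa [hx] using hcL ⟨x, hx⟩, fun x hx y hy hxy => ?_⟩
  simp only [dif_neg hx, dif_neg hy]
  obtain ⟨hne, hadj | ⟨z, hxz, hzy⟩⟩ := hxy
  · exact hc _ _ ⟨fun h => hne (congrArg Subtype.val h), Or.inl hadj⟩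
  · by_cases hz : z ∈ T
    · exact absurd (hout z hz x hx y hy hxz.symm hzy) hne
    · exact hc _ _ ⟨fun h => hne (congrArg Subtype.val h), Or.inr ⟨⟨z, hz⟩, hxz, hzy⟩⟩

end Deletion

def SimpleGraph.closedNeighborSet (G : SimpleGraph V) (v : V) : Set V :=
  insert v (G.neighborSet v)

section Counting

variable [Fintype V] {G : SimpleGraph V}

theorem Subcubic.length_le (hsub : Subcubic G) {x : V} {l : List V} (hl : l.Nodup)
    (hadj : ∀ y ∈ l, G.Adj x y) : l.length ≤ 3 := by
  classical
  calc l.length = (l.toFinset : Set V).ncard := by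
        rw [Set.ncard_coe_finset, List.toFinset_card_of_nodup hl]
    _ ≤ (G.neighborSet x).ncard := Set.ncard_le_ncard fun y hy => hadj y (by simpa using hy)
    _ ≤ 3 := hsub x

theorem Subcubic.eq_or_eq_or_eq_of_adj (hsub : Subcubic G) {x a b c y : V}
    (hnd : [a, b, c].Nodup) (ha : G.Adj x a) (hb : G.Adj x b) (hc : G.Adj x c)
    (hy : G.Adj x y) : y = a ∨ y = b ∨ y = c := by
  by_contra hne
  have := hsub.length_le (x := x) (l := [a, b, c, y]) (by grind [List.nodup_cons])
    (by simp [ha, hb, hc, hy])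
  simp at this

theorem Subcubic.eq_of_adj_of_notMem (hsub : Subcubic G) {T : Set V} {z p q a b : V}
    (hpq : p ≠ q) (hp : p ∈ T) (hq : q ∈ T) (hzp : G.Adj z p) (hzq : G.Adj z q)
    (ha : a ∉ T) (hb : b ∉ T) (hza : G.Adj z a) (hzb : G.Adj z b) : a = b := by
  have hpa : p ≠ a := fun h => ha (h ▸ hp)
  have hqa : q ≠ a := fun h => ha (h ▸ hq)
  rcases hsub.eq_or_eq_or_eq_of_adj (by simp [hpq, hpa, hqa]) hzp hzq hza hzb with
    rfl | rfl | rfl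
  · exact absurd hp hb
  · exact absurd hq hb
  · rfl

theorem Subcubic.ncard_closedNeighborSet_diff_add_length_le (hsub : Subcubic G) {T : Set V}
    {z : V} {K : List V} (hK : K.Nodup) (hKT : ∀ y ∈ K, y ∈ T ∧ y ∈ G.closedNeighborSet z) :
    (G.closedNeighborSet z \ T).ncard + K.length ≤ 4 := by
  classical
  have hdisj : Disjoint (G.closedNeighborSet z \ T) (K.toFinset : Set V) :=
    Set.disjoint_left.mpr fun y hy hyK => hy.2 (hKT y (by simpa using hyK)).1
  have hsubset : G.closedNeighborSet z \ T ∪ K.toFinset ⊆ G.closedNeighborSet z :=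
    Set.union_subset Set.sdiff_subset fun y hy => (hKT y (by simpa using hy)).2
  have := Set.ncard_le_ncard hsubset
  rw [Set.ncard_union_eq hdisj, Set.ncard_coe_finset, List.toFinset_card_of_nodup hK] at this
  have := Set.ncard_insert_le z (G.neighborSet z)
  have := hsub z
  unfold closedNeighborSet at *
  omega

theorem Subcubic.ncard_closedNeighborSet_diff_le_one (hsub : Subcubic G) {T : Set V}
    {z a b : V} (hz : z ∈ T) (ha : a ∈ T) (hb : b ∈ T) (hab : a ≠ b) (hza : G.Adj z a)
    (hzb : G.Adj z b) :
    (G.closedNeighborSet z \ T).ncard ≤ 1 := by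
  have := hsub.ncard_closedNeighborSet_diff_add_length_le (T := T) (z := z) (K := [z, a, b])
    (by simp [hab, hza.ne, hzb.ne]) (by simp [closedNeighborSet, hz, ha, hb, hza, hzb])
  simp only [List.length_cons, List.length_nil] at this
  omega

theorem Subcubic.ncard_closedNeighborSet_diff_eq_zero (hsub : Subcubic G) {T : Set V}
    {z a b c : V} (hz : z ∈ T) (ha : a ∈ T) (hb : b ∈ T) (hc : c ∈ T) (hnd : [a, b, c].Nodup)
    (hza : G.Adj z a) (hzb : G.Adj z b) (hzc : G.Adj z c) :
    (G.closedNeighborSet z \ T).ncard = 0 := by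
  have := hsub.ncard_closedNeighborSet_diff_add_length_le (T := T) (z := z) (K := [z, a, b, c])
    (by simp_all [hza.ne, hzb.ne, hzc.ne])
    (by simp [closedNeighborSet, hz, ha, hb, hc, hza, hzb, hzc])
  simp only [List.length_cons, List.length_nil] at this
  omega

theorem ncard_square_neighborSet_diff_le {T : Set V} {x a b c : V}
    (hN : ∀ y, G.Adj x y → y = a ∨ y = b ∨ y = c) :
    ((square G).neighborSet x \ T).ncard ≤ (G.closedNeighborSet a \ T).ncard +
      (G.closedNeighborSet b \ T).ncard + (G.closedNeighborSet c \ T).ncard := by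
  have hsubset : (square G).neighborSet x \ T ⊆ (G.closedNeighborSet a \ T ∪
      G.closedNeighborSet b \ T) ∪ G.closedNeighborSet c \ T := by
    rintro y ⟨⟨-, hxy | ⟨z, hxz, hzy⟩⟩, hyT⟩
    · rcases hN y hxy with rfl | rfl | rfl <;> simp [closedNeighborSet, hyT]
    · rcases hN z hxz with rfl | rfl | rfl <;> simp [closedNeighborSet, hyT, hzy]
  have := Set.ncard_le_ncard hsubset
  have := Set.ncard_union_le (G.closedNeighborSet a \ T ∪ G.closedNeighborSet b \ T)
    (G.closedNeighborSet c \ T)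
  have := Set.ncard_union_le (G.closedNeighborSet a \ T) (G.closedNeighborSet b \ T)
  omega

theorem Subcubic.ncard_square_neighborSet_diff_le_add_three (hsub : Subcubic G) {T : Set V}
    {x a b : V} (hx : x ∈ T) (hab : a ≠ b) (ha : G.Adj x a) (hb : G.Adj x b) :
    ((square G).neighborSet x \ T).ncard ≤ (G.closedNeighborSet a \ T).ncard +
      (G.closedNeighborSet b \ T).ncard + 3 := by
  obtain ⟨c, hc, hN⟩ : ∃ c, G.Adj x c ∧ ∀ y, G.Adj x y → y = a ∨ y = b ∨ y = c := by
    by_cases h : ∃ c, G.Adj x c ∧ c ≠ a ∧ c ≠ b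
    · obtain ⟨c, hc, hca, hcb⟩ := h
      exact ⟨c, hc, fun y hy =>
        hsub.eq_or_eq_or_eq_of_adj (by simp [hab, hca.symm, hcb.symm]) ha hb hc hy⟩
    · push Not at h
      exact ⟨a, ha, fun y hy => by have := h y hy; tauto⟩
  have hC := hsub.ncard_closedNeighborSet_diff_add_length_le (T := T) (z := c) (K := [x])
    (by simp) (by simp [closedNeighborSet, hx, hc.symm])
  have := ncard_square_neighborSet_diff_le (T := T) hN
  simp only [List.length_cons, List.length_nil] at hC
  omega

end Counting

theorem le_card_sdiff_of_card_le {α : Type} [DecidableEq α] {s t : Finset α} {m n : ℕ}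
    (hs : m + n ≤ #s) (ht : #t ≤ n) : m ≤ #(s \ t) := by
  have := le_card_sdiff t s
  omega

def IsListColoring (H : SimpleGraph W) (L : W → Finset ℕ) (c : W → ℕ) : Prop :=
  (∀ v, c v ∈ L v) ∧ ∀ u v, H.Adj u v → c u ≠ c v

def FChoosable (H : SimpleGraph W) (s : W → ℕ) : Prop :=
  ∀ L : W → Finset ℕ, (∀ v, s v ≤ #(L v)) → ∃ c, IsListColoring H L c

section Reducible

variable [Fintype V] {G : SimpleGraph V}

theorem choosable_square_of_reducible (hsub : Subcubic G) (hpl : Planar G) (h5 : NoFiveCycle G)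
    (hmin : SquareChoosableBelow (Fintype.card V)) {k : ℕ} {f : Fin k → V}
    (hf : Function.Injective f) (hk : 0 < k)
    (hout : ∀ i, ∀ a ∉ Set.range f, ∀ b ∉ Set.range f, G.Adj (f i) a → G.Adj (f i) b → a = b)
    {H : SimpleGraph (Fin k)} (hH : ∀ i j, (square G).Adj (f i) (f j) → H.Adj i j)
    {s : Fin k → ℕ} (hs : FChoosable H s)
    (hdeg : ∀ i, s i + ((square G).neighborSet (f i) \ Set.range f).ncard ≤ 7) :
    Choosable (square G) 7 := by
  classical
  intro L hL
  obtain ⟨φ, hφL, hφ⟩ := exists_square_coloring_compl hsub hpl h5 hmin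
    ⟨f ⟨0, hk⟩, Set.mem_range_self _⟩ (by rintro _ ⟨i, rfl⟩; exact hout i) L hL
  set T := Set.range f
  let forbidden i := ((square G).neighborSet (f i) \ T).toFinset.image φ
  obtain ⟨c, hcL, hc⟩ := hs (fun i => L (f i) \ forbidden i) fun i => by
    refine le_card_sdiff_of_card_le (by rw [hL]; exact hdeg i) ?_
    rw [Set.ncard_eq_toFinset_card']
    exact card_image_le
  have hcφ : ∀ i, ∀ y ∉ T, (square G).Adj (f i) y → c i ≠ φ y := fun i y hy hadj h =>
    (mem_sdiff.mp (hcL i)).2 (mem_image.mpr ⟨y, by simp [hy, hadj], h.symm⟩)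
  refine ⟨Function.extend f c φ, fun x => ?_, fun x y hxy => ?_⟩
  · by_cases hx : x ∈ T
    · obtain ⟨i, rfl⟩ := hx
      rw [hf.extend_apply]
      exact (mem_sdiff.mp (hcL i)).1
    · rw [Function.extend_apply' _ _ _ hx]
      exact hφL x hx
  · by_cases hx : x ∈ T <;> by_cases hy : y ∈ T
    · obtain ⟨i, rfl⟩ := hx
      obtain ⟨j, rfl⟩ := hy
      rw [hf.extend_apply, hf.extend_apply]
      exact hc i j (hH i j hxy)
    · obtain ⟨i, rfl⟩ := hx
      rw [hf.extend_apply, Function.extend_apply' _ _ _ hy]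
      exact hcφ i y hy hxy
    · obtain ⟨j, rfl⟩ := hy
      rw [hf.extend_apply, Function.extend_apply' _ _ _ hx]
      exact (hcφ j x hx hxy.symm).symm
    · rw [Function.extend_apply' _ _ _ hx, Function.extend_apply' _ _ _ hy]
      exact hφ x hx y hy hxy

end Reducible

theorem exists_injective_mem_of_card_le {ι α : Type} [Fintype ι] [DecidableEq α]
    (t : ι → Finset α) (ht : ∀ i, Fintype.card ι ≤ #(t i) + 1)
    (hunion : Fintype.card ι ≤ #(univ.biUnion t)) :
    ∃ f : ι → α, Function.Injective f ∧ ∀ i, f i ∈ t i := by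
  refine (all_card_le_biUnion_card_iff_exists_injective t).mp fun s => ?_
  obtain rfl | hs := eq_or_ne s univ
  · exact hunion
  obtain rfl | ⟨i, hi⟩ := s.eq_empty_or_nonempty
  · simp
  have := (card_lt_iff_ne_univ s).mpr hs
  have := card_le_card (subset_biUnion_of_mem t hi)
  have := ht i
  omega

theorem fChoosable_top [Fintype W] : FChoosable (⊤ : SimpleGraph W) fun _ => Fintype.card W := by
  classical
  intro L hL
  obtain ⟨c, hc, hcL⟩ := exists_injective_mem_of_card_le L (fun i => (hL i).trans (Nat.le_succ _))
    (by
      obtain h | ⟨i, -⟩ := (univ : Finset W).eq_empty_or_nonempty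
      · simp [← card_univ, h]
      · exact (hL i).trans (card_le_card (subset_biUnion_of_mem L (mem_univ i))))
  exact ⟨c, hcL, fun u v huv => hc.ne huv⟩

theorem exists_ne_of_card_union {α : Type} [DecidableEq α] {A B C : Finset α} (hA : 2 ≤ #A)
    (hB : 2 ≤ #B) (hC : 2 ≤ #C) (hABC : 3 ≤ #(A ∪ B ∪ C)) :
    ∃ a ∈ A, ∃ b ∈ B, ∃ c ∈ C, a ≠ b ∧ a ≠ c ∧ b ≠ c := by
  have hunion : univ.biUnion ![A, B, C] = A ∪ B ∪ C := by
    ext x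
    simp [Fin.exists_fin_succ]
  obtain ⟨f, hf, hfABC⟩ := exists_injective_mem_of_card_le ![A, B, C]
    (fun i => by
      rw [Fintype.card_fin]
      fin_cases i
      exacts [show 3 ≤ #A + 1 by omega, show 3 ≤ #B + 1 by omega, show 3 ≤ #C + 1 by omega])
    (by simpa [hunion] using hABC)
  exact ⟨f 0, hfABC 0, f 1, hfABC 1, f 2, hfABC 2, hf.ne (by decide), hf.ne (by decide),
    hf.ne (by decide)⟩

theorem exists_mem_forall_three_le_card_sdiff_union {α : Type} [DecidableEq α] {A B C : Finset α}
    (hAC : Disjoint A C) (hA : 4 ≤ #A) (hB : 5 ≤ #B) (hC : 2 ≤ #C) :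
    ∃ z ∈ C, ∀ x y, 3 ≤ #(A \ {x, y} ∪ B \ {x, z, y}) := by
  by_cases hCB : C ⊆ B
  · obtain ⟨z, hz⟩ := card_pos.mp (by omega : 0 < #C)
    obtain ⟨z', hz', hzz'⟩ := exists_mem_notMem_of_card_lt_card (s := {z}) (t := C)
      (by rw [card_singleton]; omega)
    refine ⟨z, hz, fun x y => ?_⟩
    have hsub : insert z' A \ {x, y} ⊆ A \ {x, y} ∪ B \ {x, z, y} := by
      intro a ha
      simp only [mem_sdiff, mem_insert, mem_singleton, mem_union, not_or] at ha hzz' ⊢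
      rcases ha with ⟨rfl | ha, hax, hay⟩
      · exact Or.inr ⟨hCB hz', hax, hzz', hay⟩
      · exact Or.inl ⟨ha, hax, hay⟩
    have hz'A : 3 + 2 ≤ #(insert z' A) := by
      rw [card_insert_of_notMem fun h => disjoint_left.mp hAC h hz']
      omega
    exact (le_card_sdiff_of_card_le hz'A card_le_two).trans (card_le_card hsub)
  · obtain ⟨z, hzC, hzB⟩ := not_subset.mp hCB
    refine ⟨z, hzC, fun x y => ?_⟩
    have hsub : B \ {x, y} ⊆ A \ {x, y} ∪ B \ {x, z, y} := by
      intro b hb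
      simp only [mem_sdiff, mem_insert, mem_singleton, mem_union, not_or] at hb ⊢
      exact Or.inr ⟨hb.1, hb.2.1, fun h => hzB (h ▸ hb.1), hb.2.2⟩
    exact (le_card_sdiff_of_card_le (by omega) card_le_two).trans (card_le_card hsub)

instance [Fintype V] [DecidableEq V] (G : SimpleGraph V) [DecidableRel G.Adj] :
    DecidableRel (square G).Adj :=
  fun u v => inferInstanceAs (Decidable (u ≠ v ∧ (G.Adj u v ∨ ∃ w, G.Adj u w ∧ G.Adj w v)))

/-- The triangle `w u v` = `0 1 2` sharing the edge `u v` with the hexagon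
`u v p₁ p₂ p₃ p₄` = `1 2 3 4 5 6`. -/
def triangleHexagonEdges : Finset (Sym2 (Fin 7)) :=
  {s(0, 1), s(0, 2), s(1, 2), s(2, 3), s(3, 4), s(4, 5), s(5, 6), s(6, 1)}

def triangleHexagon : SimpleGraph (Fin 7) where
  Adj i j := s(i, j) ∈ triangleHexagonEdges
  symm := ⟨fun i j h => by rwa [Sym2.eq_swap]⟩
  loopless := ⟨by decide⟩

instance : DecidableRel triangleHexagon.Adj := fun i j =>
  inferInstanceAs (Decidable (s(i, j) ∈ triangleHexagonEdges))

namespace triangleHexagon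

theorem exists_isListColoring_of_mem {L : Fin 7 → Finset ℕ}
    (hL : ∀ i, ![4, 5, 5, 3, 2, 2, 3] i ≤ #(L i)) {γ : ℕ} (hγw : γ ∈ L 0) (hγ₃ : γ ∈ L 5) :
    ∃ c, IsListColoring (square triangleHexagon) L c := by
  have hu : 5 ≤ #(L 1) := hL 1
  have hv : 5 ≤ #(L 2) := hL 2
  have h₁ : 3 ≤ #(L 3) := hL 3
  have h₂ : 2 ≤ #(L 4) := hL 4
  have h₄ : 3 ≤ #(L 6) := hL 6
  obtain ⟨c₂, hc₂, hc₂'⟩ := exists_mem_notMem_of_card_lt_card (s := {γ}) (t := L 4)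
    (by rw [card_singleton]; omega)
  obtain ⟨c₄, hc₄, hc₄'⟩ := exists_mem_notMem_of_card_lt_card (s := {γ, c₂}) (t := L 6)
    (card_le_two.trans_lt (by omega))
  obtain ⟨c₁, hc₁, hc₁'⟩ := exists_mem_notMem_of_card_lt_card (s := {γ, c₂}) (t := L 3)
    (card_le_two.trans_lt (by omega))
  obtain ⟨cv, hcv, hcv'⟩ := exists_mem_notMem_of_card_lt_card (s := {γ, c₂, c₁, c₄}) (t := L 2)
    (card_le_four.trans_lt (by omega))
  obtain ⟨cu, hcu, hcu'⟩ := exists_mem_notMem_of_card_lt_card (s := {γ, cv, c₁, c₄}) (t := L 1)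
    (card_le_four.trans_lt (by omega))
  simp only [mem_insert, mem_singleton, not_or] at hc₂' hc₄' hc₁' hcv' hcu'
  obtain ⟨_, _⟩ := hc₄'
  obtain ⟨_, _⟩ := hc₁'
  obtain ⟨_, _, _, _⟩ := hcv'
  obtain ⟨_, _, _, _⟩ := hcu'
  refine ⟨![γ, cu, cv, c₁, c₂, γ, c₄], fun i => ?_, fun i j hij => ?_⟩
  · fin_cases i <;> assumption
  · fin_cases i <;> fin_cases j <;>
      first | exact absurd hij (by decide) | assumption | exact Ne.symm ‹_›

theorem exists_isListColoring_of_disjoint {L : Fin 7 → Finset ℕ}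
    (hL : ∀ i, ![4, 5, 5, 3, 2, 2, 3] i ≤ #(L i)) (hw₃ : Disjoint (L 0) (L 5)) :
    ∃ c, IsListColoring (square triangleHexagon) L c := by
  have hw : 4 ≤ #(L 0) := hL 0
  have hu : 5 ≤ #(L 1) := hL 1
  have hv : 5 ≤ #(L 2) := hL 2
  have h₁ : 3 ≤ #(L 3) := hL 3
  have h₂ : 2 ≤ #(L 4) := hL 4
  have h₄ : 3 ≤ #(L 6) := hL 6
  obtain ⟨c₃, hc₃, hunion⟩ := exists_mem_forall_three_le_card_sdiff_union hw₃ hw hu (hL 5)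
  obtain ⟨c₂, hc₂, hc₂'⟩ := exists_mem_notMem_of_card_lt_card (s := {c₃}) (t := L 4)
    (by rw [card_singleton]; omega)
  obtain ⟨c₁, hc₁, hc₁'⟩ := exists_mem_notMem_of_card_lt_card (s := {c₂, c₃}) (t := L 3)
    (card_le_two.trans_lt (by omega))
  obtain ⟨c₄, hc₄, hc₄'⟩ := exists_mem_notMem_of_card_lt_card (s := {c₂, c₃}) (t := L 6)
    (card_le_two.trans_lt (by omega))
  have hA : 2 ≤ #(L 0 \ {c₁, c₄}) := le_card_sdiff_of_card_le hw card_le_two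
  have hB : 2 ≤ #(L 1 \ {c₁, c₃, c₄}) := le_card_sdiff_of_card_le hu card_le_three
  have hC : 2 ≤ #(L 2 \ {c₁, c₂, c₄}) := le_card_sdiff_of_card_le hv card_le_three
  obtain ⟨cw, hcw, cu, hcu, cv, hcv, _, _, _⟩ :=
    exists_ne_of_card_union hA hB hC ((hunion c₁ c₄).trans (card_le_card subset_union_left))
  simp only [mem_sdiff, mem_insert, mem_singleton, not_or] at hc₂' hc₁' hc₄' hcw hcu hcv
  obtain ⟨_, _⟩ := hc₁'
  obtain ⟨_, _⟩ := hc₄'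
  obtain ⟨_, _, _⟩ := hcw
  obtain ⟨_, _, _, _⟩ := hcu
  obtain ⟨_, _, _, _⟩ := hcv
  refine ⟨![cw, cu, cv, c₁, c₂, c₃, c₄], fun i => ?_, fun i j hij => ?_⟩
  · fin_cases i <;> assumption
  · fin_cases i <;> fin_cases j <;>
      first | exact absurd hij (by decide) | assumption | exact Ne.symm ‹_›

end triangleHexagon

theorem fChoosable_square_triangleHexagon :
    FChoosable (square triangleHexagon) ![4, 5, 5, 3, 2, 2, 3] := by
  intro L hL
  by_cases hw₃ : Disjoint (L 0) (L 5)
  · exact triangleHexagon.exists_isListColoring_of_disjoint hL hw₃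
  · obtain ⟨γ, hγw, hγ₃⟩ := not_disjoint_iff.mp hw₃
    exact triangleHexagon.exists_isListColoring_of_mem hL hγw hγ₃

section Hexagon

variable {G : SimpleGraph V} {h : Fin 6 → V} {w : V}

theorem NoFiveCycle.not_nodup (h5 : NoFiveCycle G) {a b c d e : V} (hab : G.Adj a b)
    (hbc : G.Adj b c) (hcd : G.Adj c d) (hde : G.Adj d e) (hea : G.Adj e a) :
    ¬ [a, b, c, d, e].Nodup := by
  intro hnd
  refine h5 a (.cons hab (.cons hbc (.cons hcd (.cons hde (.cons hea .nil))))) ?_ rfl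
  rw [Walk.cons_isCycle_iff]
  simp only [List.nodup_cons, List.mem_cons, List.not_mem_nil] at hnd
  refine ⟨Walk.IsPath.mk' ?_, ?_⟩
  · simp only [Walk.support_cons, Walk.support_nil, List.nodup_cons, List.mem_cons]
    tauto
  · simp only [Walk.edges_cons, Walk.edges_nil, List.mem_cons, Sym2.eq, Sym2.rel_iff',
      Prod.mk.injEq, Prod.swap_prod_mk, and_true, true_and, List.not_mem_nil, or_false, not_or,
      not_and]
    tauto

theorem NoFiveCycle.not_adj_add_two (h5 : NoFiveCycle G) (hh : Function.Injective h)
    (hadj : ∀ k, G.Adj (h k) (h (k + 1))) (k : Fin 6) : ¬ G.Adj (h k) (h (k + 2)) := fun hk =>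
  h5.not_nodup hk (by simpa [add_assoc] using hadj (k + 2))
    (by simpa [add_assoc] using hadj (k + 3)) (by simpa [add_assoc] using hadj (k + 4))
    (by simpa [add_assoc] using hadj (k + 5)) (by simp [hh.eq_iff])

theorem NoFiveCycle.notMem_range_of_adj (h5 : NoFiveCycle G) (hh : Function.Injective h)
    (hadj : ∀ k, G.Adj (h k) (h (k + 1))) (hw₀ : G.Adj w (h 0)) (hw₁ : G.Adj w (h 1)) :
    w ∉ Set.range h := by
  rintro ⟨k, rfl⟩
  fin_cases k
  · exact hw₀.ne rfl
  · exact hw₁.ne rfl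
  · exact h5.not_adj_add_two hh hadj 0 hw₀.symm
  · exact h5.not_adj_add_two hh hadj 1 hw₁.symm
  · exact h5.not_adj_add_two hh hadj 4 hw₀
  · exact h5.not_adj_add_two hh hadj 5 hw₁

theorem NoFiveCycle.not_square_adj_zero_three (h5 : NoFiveCycle G) (hh : Function.Injective h)
    (hadj : ∀ k, G.Adj (h k) (h (k + 1))) (hw : w ∉ Set.range h) (hw₀ : G.Adj w (h 0))
    (hw₁ : G.Adj w (h 1)) : ¬ (square G).Adj (h 0) (h 3) := by
  have hw' : ∀ k, w ≠ h k := fun k hk => hw ⟨k, hk.symm⟩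
  rintro ⟨-, h₀₃ | ⟨z, h₀z, hz₃⟩⟩
  · exact h5.not_nodup hw₀ h₀₃ (hadj 2).symm (hadj 1).symm hw₁.symm
      (by simp [hh.eq_iff, hw'])
  by_cases hz₁ : z = h 1
  · exact h5.not_adj_add_two hh hadj 1 (hz₁ ▸ hz₃)
  by_cases hz₂ : z = h 2
  · exact h5.not_adj_add_two hh hadj 0 (hz₂ ▸ h₀z)
  exact h5.not_nodup hz₃ (hadj 2).symm (hadj 1).symm (hadj 0).symm h₀z
    (by simp [hh.eq_iff, hz₁, hz₂, hz₃.ne, h₀z.ne'])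

theorem NoFiveCycle.not_square_adj_three (h5 : NoFiveCycle G) (hh : Function.Injective h)
    (hadj : ∀ k, G.Adj (h k) (h (k + 1))) (hw : w ∉ Set.range h) (hw₀ : G.Adj w (h 0))
    (hw₁ : G.Adj w (h 1)) (hw₂ : ¬ G.Adj w (h 2)) : ¬ (square G).Adj w (h 3) := by
  have hw' : ∀ k, w ≠ h k := fun k hk => hw ⟨k, hk.symm⟩
  rintro ⟨-, hw₃ | ⟨z, hwz, hz₃⟩⟩
  · exact h5.not_nodup hw₃ (hadj 3) (hadj 4) (hadj 5) hw₀.symm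
      (by simp [hh.eq_iff, hw'])
  by_cases hz₀ : z = h 0
  · exact h5.not_square_adj_zero_three hh hadj hw hw₀ hw₁
      ⟨hh.ne (by decide), Or.inl (hz₀ ▸ hz₃)⟩
  by_cases hz₁ : z = h 1
  · exact h5.not_adj_add_two hh hadj 1 (hz₁ ▸ hz₃)
  by_cases hz₂ : z = h 2
  · exact hw₂ (hz₂ ▸ hwz)
  exact h5.not_nodup hz₃ (hadj 2).symm (hadj 1).symm hw₁.symm hwz
    (by simp [hh.eq_iff, Ne.symm (hw' _), hz₁, hz₂, hz₃.ne, hwz.ne'])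

theorem NoFiveCycle.not_square_adj_two_five (h5 : NoFiveCycle G) (hh : Function.Injective h)
    (hadj : ∀ k, G.Adj (h k) (h (k + 1))) (hw : w ∉ Set.range h) (hw₀ : G.Adj w (h 0))
    (hw₁ : G.Adj w (h 1)) : ¬ (square G).Adj (h 2) (h 5) := by
  have hw' : ∀ k, w ≠ h k := fun k hk => hw ⟨k, hk.symm⟩
  rintro ⟨-, h₂₅ | ⟨z, h₂z, hz₅⟩⟩
  · exact h5.not_nodup h₂₅ (hadj 5) hw₀.symm hw₁ (hadj 1)
      (by simp [hh.eq_iff, hw', Ne.symm (hw' _)])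
  by_cases hz₀ : z = h 0
  · exact h5.not_adj_add_two hh hadj 0 (hz₀ ▸ h₂z.symm)
  by_cases hz₁ : z = h 1
  · exact h5.not_adj_add_two hh hadj 5 (hz₁ ▸ hz₅.symm)
  exact h5.not_nodup hz₅ (hadj 5) (hadj 0) (hadj 1) h₂z
    (by simp [hh.eq_iff, hz₀, hz₁, hz₅.ne, h₂z.ne'])

theorem NoFiveCycle.square_adj_triangleHexagon (h5 : NoFiveCycle G)
    (hh : Function.Injective h) (hadj : ∀ k, G.Adj (h k) (h (k + 1))) (hw₀ : G.Adj w (h 0))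
    (hw₁ : G.Adj w (h 1)) (hw₂ : ¬ G.Adj w (h 2)) (hw₅ : ¬ G.Adj w (h 5)) (i j : Fin 7)
    (hij : (square G).Adj ((Fin.cons w h : Fin 7 → V) i) ((Fin.cons w h : Fin 7 → V) j)) :
    (square triangleHexagon).Adj i j := by
  have hw := h5.notMem_range_of_adj hh hadj hw₀ hw₁
  -- the reflection `k ↦ 1 - k` of the hexagon fixes the shared edge
  have hh' : Function.Injective fun k => h (1 - k) := hh.comp sub_right_injective
  have hadj' (k : Fin 6) : G.Adj (h (1 - k)) (h (1 - (k + 1))) := by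
    have := hadj (1 - (k + 1))
    rw [show 1 - (k + 1) + 1 = 1 - k by abel] at this
    exact this.symm
  have hw' : w ∉ Set.range fun k => h (1 - k) := fun ⟨k, hk⟩ => hw ⟨1 - k, hk⟩
  have N₁₄ := h5.not_square_adj_zero_three hh hadj hw hw₀ hw₁
  have N₂₅ : ¬ (square G).Adj (h 1) (h 4) := by
    simpa using h5.not_square_adj_zero_three hh' hadj' hw' (by simpa using hw₁)
      (by simpa using hw₀)
  have N₀₄ := h5.not_square_adj_three hh hadj hw hw₀ hw₁ hw₂
  have N₀₅ : ¬ (square G).Adj w (h 4) := by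
    simpa using h5.not_square_adj_three hh' hadj' hw' (by simpa using hw₁) (by simpa using hw₀)
      (by simpa using hw₅)
  have N₃₆ := h5.not_square_adj_two_five hh hadj hw hw₀ hw₁
  fin_cases i <;> fin_cases j
  all_goals first
    | decide
    | exact absurd hij (SimpleGraph.irrefl _)
    | exact absurd hij N₁₄ | exact absurd hij.symm N₁₄
    | exact absurd hij N₂₅ | exact absurd hij.symm N₂₅
    | exact absurd hij N₀₄ | exact absurd hij.symm N₀₄
    | exact absurd hij N₀₅ | exact absurd hij.symm N₀₅
    | exact absurd hij N₃₆ | exact absurd hij.symm N₃₆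

end Hexagon

section Configurations

variable [Fintype V] {G : SimpleGraph V}

theorem choosable_square_of_diamond (hsub : Subcubic G) (hpl : Planar G) (h5 : NoFiveCycle G)
    (hmin : SquareChoosableBelow (Fintype.card V)) {a b c d : V} (hab : G.Adj a b)
    (hac : G.Adj a c) (hbc : G.Adj b c) (hbd : G.Adj b d) (hcd : G.Adj c d) (had : a ≠ d) :
    Choosable (square G) 7 := by
  have hf : Function.Injective ![a, b, c, d] :=
    List.nodup_ofFn.mp (by simp [hab.ne, hac.ne, had, hbc.ne, hbd.ne, hcd.ne])
  set T := Set.range ![a, b, c, d]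
  have ha : a ∈ T := ⟨0, rfl⟩
  have hb : b ∈ T := ⟨1, rfl⟩
  have hc : c ∈ T := ⟨2, rfl⟩
  have hd : d ∈ T := ⟨3, rfl⟩
  have hCa := hsub.ncard_closedNeighborSet_diff_le_one ha hb hc hbc.ne hab hac
  have hCb := hsub.ncard_closedNeighborSet_diff_eq_zero hb ha hc hd
    (by simp [hac.ne, had, hcd.ne]) hab.symm hbc hbd
  have hCc := hsub.ncard_closedNeighborSet_diff_eq_zero hc ha hb hd
    (by simp [hab.ne, had, hbd.ne]) hac.symm hbc.symm hcd
  have hCd := hsub.ncard_closedNeighborSet_diff_le_one hd hb hc hbc.ne hbd.symm hcd.symm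
  have hSa := hsub.ncard_square_neighborSet_diff_le_add_three ha hbc.ne hab hac
  have hSb := ncard_square_neighborSet_diff_le (T := T) fun y hy =>
    hsub.eq_or_eq_or_eq_of_adj (by simp [hac.ne, had, hcd.ne]) hab.symm hbc hbd hy
  have hSc := ncard_square_neighborSet_diff_le (T := T) fun y hy =>
    hsub.eq_or_eq_or_eq_of_adj (by simp [hab.ne, had, hbd.ne]) hac.symm hbc.symm hcd hy
  have hSd := hsub.ncard_square_neighborSet_diff_le_add_three hd hbc.ne hbd.symm hcd.symm
  refine choosable_square_of_reducible hsub hpl h5 hmin hf (by norm_num) (H := ⊤) ?_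
    (fun i j hij => (top_adj i j).mpr fun h => hij.ne (h ▸ rfl))
    (by simpa using fChoosable_top (W := Fin 4)) fun i => ?_
  · intro i
    fin_cases i
    · exact fun x hx y hy => hsub.eq_of_adj_of_notMem hbc.ne hb hc hab hac hx hy
    · exact fun x hx y hy => hsub.eq_of_adj_of_notMem hac.ne ha hc hab.symm hbc hx hy
    · exact fun x hx y hy => hsub.eq_of_adj_of_notMem hab.ne ha hb hac.symm hbc.symm hx hy
    · exact fun x hx y hy => hsub.eq_of_adj_of_notMem hbc.ne hb hc hbd.symm hcd.symm hx hy
  · fin_cases i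
    · show 4 + ((square G).neighborSet a \ T).ncard ≤ 7; omega
    · show 4 + ((square G).neighborSet b \ T).ncard ≤ 7; omega
    · show 4 + ((square G).neighborSet c \ T).ncard ≤ 7; omega
    · show 4 + ((square G).neighborSet d \ T).ncard ≤ 7; omega

theorem Subcubic.ncard_square_neighborSet_diff_triangleHexagon (hsub : Subcubic G) {w : V}
    {h : Fin 6 → V} (hh : Function.Injective h) (hadj : ∀ k, G.Adj (h k) (h (k + 1)))
    (hw : w ∉ Set.range h) (hw₀ : G.Adj w (h 0)) (hw₁ : G.Adj w (h 1)) (i : Fin 7) :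
    ![4, 5, 5, 3, 2, 2, 3] i +
      ((square G).neighborSet ((Fin.cons w h : Fin 7 → V) i) \
        Set.range (Fin.cons w h)).ncard ≤ 7 := by
  set T := Set.range (Fin.cons w h : Fin 7 → V)
  have hwT : w ∈ T := ⟨0, rfl⟩
  have hhT (k : Fin 6) : h k ∈ T := ⟨k.succ, rfl⟩
  have hhw (k : Fin 6) : h k ≠ w := fun hk => hw ⟨k, hk⟩
  have h₀₁ : G.Adj (h 0) (h 1) := hadj 0
  have h₁₂ : G.Adj (h 1) (h 2) := hadj 1
  have h₅₀ : G.Adj (h 5) (h 0) := hadj 5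
  have hadj_sub (k : Fin 6) : G.Adj (h k) (h (k - 1)) := by simpa using (hadj (k - 1)).symm
  have hne (k : Fin 6) : h (k - 1) ≠ h (k + 1) := hh.ne (by simp [sub_eq_iff_eq_add, add_assoc])
  have hCw := hsub.ncard_closedNeighborSet_diff_le_one hwT (hhT 0) (hhT 1) (hh.ne (by decide))
    hw₀ hw₁
  have hC (k : Fin 6) := hsub.ncard_closedNeighborSet_diff_le_one (hhT k) (hhT (k - 1))
    (hhT (k + 1)) (hne k) (hadj_sub k) (hadj k)
  have hC₀ := hsub.ncard_closedNeighborSet_diff_eq_zero (hhT 0) (hhT 1) (hhT 5) hwT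
    (by simp [hh.eq_iff, hhw]) h₀₁ h₅₀.symm hw₀.symm
  have hC₁ := hsub.ncard_closedNeighborSet_diff_eq_zero (hhT 1) (hhT 0) (hhT 2) hwT
    (by simp [hh.eq_iff, hhw]) h₀₁.symm h₁₂ hw₁.symm
  have hSw := hsub.ncard_square_neighborSet_diff_le_add_three hwT (hh.ne (by decide)) hw₀ hw₁
  have hS₀ := ncard_square_neighborSet_diff_le (T := T) fun y hy =>
    hsub.eq_or_eq_or_eq_of_adj (by simp [hh.eq_iff, hhw]) h₀₁ h₅₀.symm hw₀.symm hy
  have hS₁ := ncard_square_neighborSet_diff_le (T := T) fun y hy =>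
    hsub.eq_or_eq_or_eq_of_adj (by simp [hh.eq_iff, hhw]) h₀₁.symm h₁₂ hw₁.symm hy
  have hS (k : Fin 6) := hsub.ncard_square_neighborSet_diff_le_add_three (hhT k) (hne k)
    (hadj_sub k) (hadj k)
  have hS₂ := hS 2
  have hS₃ := hS 3
  have hS₄ := hS 4
  have hS₅ := hS 5
  have := hC 2; have := hC 3; have := hC 4; have := hC 5
  simp only [Fin.isValue, Fin.reduceSub, Fin.reduceAdd] at hS₂ hS₃ hS₄ hS₅
  fin_cases i
  · show 4 + ((square G).neighborSet w \ T).ncard ≤ 7; omega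
  · show 5 + ((square G).neighborSet (h 0) \ T).ncard ≤ 7; omega
  · show 5 + ((square G).neighborSet (h 1) \ T).ncard ≤ 7; omega
  · show 3 + ((square G).neighborSet (h 2) \ T).ncard ≤ 7; omega
  · show 2 + ((square G).neighborSet (h 3) \ T).ncard ≤ 7; omega
  · show 2 + ((square G).neighborSet (h 4) \ T).ncard ≤ 7; omega
  · show 3 + ((square G).neighborSet (h 5) \ T).ncard ≤ 7; omega

theorem choosable_square_of_triangleHexagon (hsub : Subcubic G) (hpl : Planar G)
    (h5 : NoFiveCycle G) (hmin : SquareChoosableBelow (Fintype.card V)) {w : V} {h : Fin 6 → V}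
    (hh : Function.Injective h) (hadj : ∀ k, G.Adj (h k) (h (k + 1))) (hw₀ : G.Adj w (h 0))
    (hw₁ : G.Adj w (h 1)) (hw₂ : ¬ G.Adj w (h 2)) (hw₅ : ¬ G.Adj w (h 5)) :
    Choosable (square G) 7 := by
  have hw := h5.notMem_range_of_adj hh hadj hw₀ hw₁
  have hhT (k : Fin 6) : h k ∈ Set.range (Fin.cons w h : Fin 7 → V) := ⟨k.succ, rfl⟩
  refine choosable_square_of_reducible hsub hpl h5 hmin (Fin.cons_injective_iff.mpr ⟨hw, hh⟩)
    (by norm_num) (fun i => ?_) (h5.square_adj_triangleHexagon hh hadj hw₀ hw₁ hw₂ hw₅)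
    fChoosable_square_triangleHexagon
    (hsub.ncard_square_neighborSet_diff_triangleHexagon hh hadj hw hw₀ hw₁)
  refine Fin.cases ?_ (fun k => ?_) i
  · exact fun x hx y hy =>
      hsub.eq_of_adj_of_notMem (hh.ne (by decide)) (hhT 0) (hhT 1) hw₀ hw₁ hx hy
  · have hadj_sub : G.Adj (h k) (h (k - 1)) := by simpa using (hadj (k - 1)).symm
    exact fun x hx y hy => hsub.eq_of_adj_of_notMem
      (hh.ne (by simp [sub_eq_iff_eq_add, add_assoc])) (hhT _) (hhT _) hadj_sub (hadj k) hx hy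

end Configurations

/-- In a vertex-minimal subcubic planar graph without 5-cycles whose square is not
7-choosable, no 3-cycle shares an edge with a 6-cycle. -/
theorem minimal_counterexample_no_triangle_sharing_edge_with_six_cycle
    {V : Type} [Fintype V] (G : SimpleGraph V)
    (hsub : Subcubic G) (hpl : Planar G) (h5 : NoFiveCycle G)
    (hnot : ¬ Choosable (square G) 7)
    (hmin : ∀ (n : ℕ), n < Fintype.card V → ∀ G' : SimpleGraph (Fin n),
      Subcubic G' → Planar G' → NoFiveCycle G' → Choosable (square G') 7) :
    ¬ ∃ (x y : V) (c₁ : G.Walk x x) (c₂ : G.Walk y y),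
      c₁.IsCycle ∧ c₂.IsCycle ∧ c₁.length = 3 ∧ c₂.length = 6 ∧
      ∃ e, e ∈ c₁.edges ∧ e ∈ c₂.edges := by
  rintro ⟨x, y, c₁, c₂, hc₁, hc₂, hl₁, hl₂, e, he₁, he₂⟩
  obtain ⟨t, -, ht, rfl⟩ := hc₁.exists_cyclic_labelling hl₁ he₁
  obtain ⟨h, hh, hadj, he⟩ := hc₂.exists_cyclic_labelling hl₂ he₂
  have hw₀₁ : G.Adj (t 2) (h 0) ∧ G.Adj (t 2) (h 1) := by
    have ht₂₀ : G.Adj (t 2) (t 0) := ht 2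
    rcases Sym2.eq_iff.mp he with ⟨h₀, h₁⟩ | ⟨h₀, h₁⟩
    · exact ⟨h₀ ▸ ht₂₀, h₁ ▸ (ht 1).symm⟩
    · exact ⟨h₁ ▸ (ht 1).symm, h₀ ▸ ht₂₀⟩
  obtain ⟨hw₀, hw₁⟩ := hw₀₁
  refine hnot ?_
  by_cases hw₂ : G.Adj (t 2) (h 2)
  · exact choosable_square_of_diamond hsub hpl h5 hmin (hadj 0) hw₀.symm hw₁.symm (hadj 1)
      hw₂ (hh.ne (by decide))
  by_cases hw₅ : G.Adj (t 2) (h 5)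
  · exact choosable_square_of_diamond hsub hpl h5 hmin (hadj 0).symm hw₁.symm hw₀.symm
      (hadj 5).symm hw₅ (hh.ne (by decide))
  exact choosable_square_of_triangleHexagon hsub hpl h5 hmin hh hadj hw₀ hw₁ hw₂ hw₅
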